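/- Set V(x) = φ_x(x,η(x)), G(η)ψ(x) = φ_y(x,η(x)) − η'(x)φ_x(x,η(x)). Then for every C¹ 2L-periodic function χ : ℝ → ℝ, one has ∫_{−L}^{L} χ(x)·(1 + η'(x)²)·V(x)² dx = ∫_{−L}^{L} χ(x)·(G(η)ψ(x))² dx + ∫_{−L}^{L} χ(x)·φ_x(x,−h)² dx − 2∫_{−L}^{L}∫_{−h}^{η(x)} χ'(x)·φ_x(x,y)·φ_y(x,y) dy dx. -/

import Mathlib

open Real Set MeasureTheory intervalIntegral

noncomputable section

/-- Horizontal derivative of the (time-independent) velocity potential. -/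
def phiX (φ : ℝ → ℝ → ℝ) (x y : ℝ) : ℝ := deriv (fun x' => φ x' y) x

/-- Vertical derivative of the (time-independent) velocity potential. -/
def phiY (φ : ℝ → ℝ → ℝ) (x y : ℝ) : ℝ := deriv (fun y' => φ x y') y

/-- The Dirichlet-to-Neumann expression `G(η)ψ` in the stationary setting. -/
def DN (η : ℝ → ℝ) (φ : ℝ → ℝ → ℝ) (x : ℝ) : ℝ :=
  phiY φ x (η x) - deriv η x * phiX φ x (η x)

/-- The quadratic expression `N(η)ψ` in the stationary setting. -/
def NOp (η : ℝ → ℝ) (φ : ℝ → ℝ → ℝ) (x : ℝ) : ℝ :=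
  1/2 * (phiX φ x (η x))^2 - 1/2 * (phiY φ x (η x))^2
    + deriv η x * phiX φ x (η x) * phiY φ x (η x)

/-! For harmonic `φ`, `∂ₓ(φₓ φ_y) = ∂_y((φₓ² - φ_y²) / 2)`: these are the Cauchy–Riemann
equations for the holomorphic function `(φₓ - i φ_y)²`. Differentiating the horizontal momentum
flux `f x = ∫_{-h}^{η x} φₓ φ_y dy` by the Leibniz rule therefore gives, with the bottom condition,
`f' = N(η)ψ - φₓ(x, -h)² / 2`, while pointwise `(1 + η'²) V² = (G(η)ψ)² + 2 N(η)ψ`. Integrating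
against `χ` and moving the derivative from `f` to `χ` by parts, with no boundary terms by
periodicity, gives the identity. -/

section PartialDerivatives

variable {F : ℝ → ℝ → ℝ}

theorem hasDerivAt_fderiv_apply_fst (hF : Differentiable ℝ ↿F) (x y : ℝ) :
    HasDerivAt (F · y) (fderiv ℝ ↿F (x, y) (1, 0)) x :=
  (hF (x, y)).hasFDerivAt.comp_hasDerivAt (f := fun x => (x, y)) x
    ((hasDerivAt_id x).prodMk (hasDerivAt_const x y))

theorem hasDerivAt_fderiv_apply_snd (hF : Differentiable ℝ ↿F) (x y : ℝ) :
    HasDerivAt (F x ·) (fderiv ℝ ↿F (x, y) (0, 1)) y :=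
  (hF (x, y)).hasFDerivAt.comp_hasDerivAt (f := fun y => (x, y)) y
    ((hasDerivAt_const y x).prodMk (hasDerivAt_id y))

theorem uncurry_phiX (hF : Differentiable ℝ ↿F) :
    ↿(phiX F) = fun z => fderiv ℝ ↿F z (1, 0) :=
  funext fun z => (hasDerivAt_fderiv_apply_fst hF z.1 z.2).deriv

theorem uncurry_phiY (hF : Differentiable ℝ ↿F) :
    ↿(phiY F) = fun z => fderiv ℝ ↿F z (0, 1) :=
  funext fun z => (hasDerivAt_fderiv_apply_snd hF z.1 z.2).deriv

theorem hasDerivAt_phiX (hF : Differentiable ℝ ↿F) (x y : ℝ) :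
    HasDerivAt (F · y) (phiX F x y) x :=
  (hasDerivAt_fderiv_apply_fst hF x y).differentiableAt.hasDerivAt

theorem hasDerivAt_phiY (hF : Differentiable ℝ ↿F) (x y : ℝ) :
    HasDerivAt (F x ·) (phiY F x y) y :=
  (hasDerivAt_fderiv_apply_snd hF x y).differentiableAt.hasDerivAt

theorem contDiff_phiX {n : WithTop ℕ∞} (hF : ContDiff ℝ (n + 1) ↿F) :
    ContDiff ℝ n ↿(phiX F) := by
  rw [uncurry_phiX (hF.differentiable (by simp))]
  exact (hF.fderiv_right le_rfl).clm_apply contDiff_const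

theorem contDiff_phiY {n : WithTop ℕ∞} (hF : ContDiff ℝ (n + 1) ↿F) :
    ContDiff ℝ n ↿(phiY F) := by
  rw [uncurry_phiY (hF.differentiable (by simp))]
  exact (hF.fderiv_right le_rfl).clm_apply contDiff_const

theorem continuous_phiX (hF : ContDiff ℝ 1 ↿F) : Continuous ↿(phiX F) :=
  (contDiff_phiX (n := 0) (by simpa using hF)).continuous

theorem continuous_phiY (hF : ContDiff ℝ 1 ↿F) : Continuous ↿(phiY F) :=
  (contDiff_phiY (n := 0) (by simpa using hF)).continuous

theorem phiX_phiY_comm (hF : ContDiff ℝ 2 ↿F) (x y : ℝ) :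
    phiX (phiY F) x y = phiY (phiX F) x y := by
  have hF₁ : Differentiable ℝ ↿F := hF.differentiable (by simp)
  have hF₂ : Differentiable ℝ (fderiv ℝ ↿F) :=
    (hF.fderiv_right (m := 1) (by norm_num)).differentiable one_ne_zero
  have hX := uncurry_phiX ((contDiff_phiY (n := 1) hF).differentiable one_ne_zero)
  have hY := uncurry_phiY ((contDiff_phiX (n := 1) hF).differentiable one_ne_zero)
  rw [uncurry_phiY hF₁] at hX
  rw [uncurry_phiX hF₁] at hY
  rw [show phiX (phiY F) x y = _ from congrFun hX (x, y),
    show phiY (phiX F) x y = _ from congrFun hY (x, y),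
    fderiv_clm_apply (hF₂ _) (differentiableAt_const _),
    fderiv_clm_apply (hF₂ _) (differentiableAt_const _)]
  simpa using ((hF.contDiffAt (x := (x, y))).isSymmSndFDerivAt (by simp) (1, 0) (0, 1))

theorem hasDerivAt_intervalIntegral_of_contDiff (hF : ContDiff ℝ 1 ↿F) (a b x : ℝ) :
    HasDerivAt (fun x => ∫ y in a..b, F x y) (∫ y in a..b, phiX F x y) x := by
  obtain ⟨M, hM⟩ := ((isCompact_closedBall x 1).prod isCompact_uIcc).exists_bound_of_continuousOn
    (continuous_phiX hF).continuousOn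
  refine (intervalIntegral.hasDerivAt_integral_of_dominated_loc_of_deriv_le (bound := fun _ => M)
    (Metric.closedBall_mem_nhds x one_pos) ?_ ?_ ?_ ?_ intervalIntegrable_const ?_).2
  · exact .of_forall fun x' =>
      (hF.continuous.comp (Continuous.prodMk_right x')).aestronglyMeasurable
  · exact (hF.continuous.comp (Continuous.prodMk_right x)).intervalIntegrable a b
  · exact ((continuous_phiX hF).comp (Continuous.prodMk_right x)).aestronglyMeasurable
  · exact .of_forall fun y hy x' hx' => hM (x', y) ⟨hx', uIoc_subset_uIcc hy⟩
  · exact .of_forall fun y _ x' _ => hasDerivAt_phiX (hF.differentiable one_ne_zero) x' y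

theorem hasDerivAt_intervalIntegral_leibniz (hF : ContDiff ℝ 1 ↿F) (a : ℝ) {b : ℝ → ℝ}
    {b' x : ℝ} (hb : HasDerivAt b b' x) :
    HasDerivAt (fun x => ∫ y in a..b x, F x y)
      ((∫ y in a..b x, phiX F x y) + b' * F x (b x)) x := by
  set Φ : ℝ → ℝ → ℝ := fun x s => ∫ y in a..s, F x y
  set Φ₁ : ℝ → ℝ → ℝ := fun x s => ∫ y in a..s, phiX F x y
  have hF_slice (x : ℝ) : Continuous (F x) := hF.continuous.comp (Continuous.prodMk_right x)
  have hΦ₁ (p : ℝ × ℝ) : HasFDerivAt (Φ · p.2)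
      (ContinuousLinearMap.toSpanSingleton ℝ (Φ₁ p.1 p.2)) p.1 :=
    (hasDerivAt_intervalIntegral_of_contDiff hF a p.2 p.1).hasFDerivAt
  have hΦ₂ (p : ℝ × ℝ) : HasFDerivAt (Φ p.1 ·)
      (ContinuousLinearMap.toSpanSingleton ℝ (F p.1 p.2)) p.2 :=
    (intervalIntegral.integral_hasDerivAt_right ((hF_slice p.1).intervalIntegrable _ _)
      ((hF_slice p.1).stronglyMeasurableAtFilter _ _) (hF_slice p.1).continuousAt).hasFDerivAt
  have hΦ : HasStrictFDerivAt ↿Φ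
      ((ContinuousLinearMap.toSpanSingleton ℝ (Φ₁ x (b x))).coprod
        (ContinuousLinearMap.toSpanSingleton ℝ (F x (b x)))) (x, b x) :=
    hasStrictFDerivAt_uncurry_coprod (u := (x, b x))
      (f₁ := fun x s => ContinuousLinearMap.toSpanSingleton ℝ (Φ₁ x s))
      (f₂ := fun x s => ContinuousLinearMap.toSpanSingleton ℝ (F x s))
      (.of_forall hΦ₁) (.of_forall hΦ₂)
      (ContinuousLinearMap.toSpanSingletonCLE.continuous.comp
        (intervalIntegral.continuous_parametric_primitive_of_continuous
          (continuous_phiX hF))).continuousAt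
      (ContinuousLinearMap.toSpanSingletonCLE.continuous.comp hF.continuous).continuousAt
  have hcomp := hΦ.hasFDerivAt.comp_hasDerivAt x ((hasDerivAt_id x).prodMk hb)
  simp only [ContinuousLinearMap.coprod_apply, ContinuousLinearMap.toSpanSingleton_apply,
    smul_eq_mul, one_mul] at hcomp
  exact hcomp

end PartialDerivatives

section Flux

variable {φ : ℝ → ℝ → ℝ}

theorem phiX_phiX_mul_phiY_eq_phiY_half_sq_sub_sq (hφ : ContDiff ℝ 2 ↿φ) {x y : ℝ}
    (hharm : phiX (phiX φ) x y + phiY (phiY φ) x y = 0) :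
    phiX (fun x y => phiX φ x y * phiY φ x y) x y
      = phiY (fun x y => (phiX φ x y ^ 2 - phiY φ x y ^ 2) / 2) x y := by
  have hX : Differentiable ℝ ↿(phiX φ) :=
    (contDiff_phiX (n := 1) hφ).differentiable one_ne_zero
  have hY : Differentiable ℝ ↿(phiY φ) :=
    (contDiff_phiY (n := 1) hφ).differentiable one_ne_zero
  have hlhs : HasDerivAt (fun x => phiX φ x y * phiY φ x y)
      (phiX (phiX φ) x y * phiY φ x y + phiX φ x y * phiX (phiY φ) x y) x :=
    (hasDerivAt_phiX hX x y).mul (hasDerivAt_phiX hY x y)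
  have hrhs : HasDerivAt (fun y => (phiX φ x y ^ 2 - phiY φ x y ^ 2) / 2)
      ((2 * phiX φ x y * phiY (phiX φ) x y - 2 * phiY φ x y * phiY (phiY φ) x y) / 2) y := by
    simpa using
      (((hasDerivAt_phiY hX x y).pow 2).sub ((hasDerivAt_phiY hY x y).pow 2)).div_const 2
  rw [phiX, phiY, hlhs.deriv, hrhs.deriv, phiX_phiY_comm hφ,
    show phiX (phiX φ) x y = -phiY (phiY φ) x y by linarith]
  ring

theorem hasDerivAt_integral_phiX_mul_phiY (hφ : ContDiff ℝ 2 ↿φ) {η : ℝ → ℝ} {c x : ℝ}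
    (hη : DifferentiableAt ℝ η x) (hc : c ≤ η x)
    (hharm : ∀ y, c < y → y < η x → phiX (phiX φ) x y + phiY (phiY φ) x y = 0) :
    HasDerivAt (fun x => ∫ y in c..η x, phiX φ x y * phiY φ x y)
      (NOp η φ x - (phiX φ x c ^ 2 - phiY φ x c ^ 2) / 2) x := by
  set g : ℝ → ℝ → ℝ := fun x y => phiX φ x y * phiY φ x y
  set P : ℝ → ℝ → ℝ := fun x y => (phiX φ x y ^ 2 - phiY φ x y ^ 2) / 2
  have hg : ContDiff ℝ 1 ↿g := (contDiff_phiX hφ).mul (contDiff_phiY hφ)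
  have hP : ContDiff ℝ 1 ↿P :=
    (((contDiff_phiX hφ).pow 2).sub ((contDiff_phiY hφ).pow 2)).div_const 2
  have hFTC : ∫ y in c..η x, phiX g x y = P x (η x) - P x c := by
    refine intervalIntegral.integral_eq_sub_of_hasDeriv_right_of_le hc
      (hP.continuous.comp (Continuous.prodMk_right x)).continuousOn (fun y hy => ?_)
      (((continuous_phiX hg).comp (Continuous.prodMk_right x)).intervalIntegrable _ _)
    rw [phiX_phiX_mul_phiY_eq_phiY_half_sq_sub_sq hφ (hharm y hy.1 hy.2)]
    exact (hasDerivAt_phiY (hP.differentiable one_ne_zero) x y).hasDerivWithinAt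
  convert hasDerivAt_intervalIntegral_leibniz hg c hη.hasDerivAt using 1
  rw [hFTC]
  simp only [NOp, P, g]
  ring

end Flux

section Periodic

variable {F : ℝ → ℝ → ℝ} {T : ℝ}

theorem phiX_add_period (hper : ∀ x y, F (x + T) y = F x y) (x y : ℝ) :
    phiX F (x + T) y = phiX F x y := by
  simp only [phiX, ← deriv_comp_add_const, hper]

theorem phiY_add_period (hper : ∀ x y, F (x + T) y = F x y) (x y : ℝ) :
    phiY F (x + T) y = phiY F x y := by
  simp only [phiY, hper]

end Periodic

theorem integral_mul_deriv_eq_neg_integral_deriv_mul {u v u' v' : ℝ → ℝ} {a b : ℝ}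
    (hu : ∀ x ∈ uIcc a b, HasDerivAt u (u' x) x) (hv : ∀ x ∈ uIcc a b, HasDerivAt v (v' x) x)
    (hu' : IntervalIntegrable u' volume a b) (hv' : IntervalIntegrable v' volume a b)
    (hab : u b * v b = u a * v a) :
    ∫ x in a..b, u x * v' x = -∫ x in a..b, u' x * v x := by
  rw [intervalIntegral.integral_mul_deriv_eq_deriv_mul hu hv hu' hv', hab, sub_self, zero_sub]

theorem one_add_deriv_sq_mul_phiX_sq (η : ℝ → ℝ) (φ : ℝ → ℝ → ℝ) (x : ℝ) :
    (1 + deriv η x ^ 2) * phiX φ x (η x) ^ 2 = DN η φ x ^ 2 + 2 * NOp η φ x := by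
  simp only [DN, NOp]
  ring

section Trace

variable {η : ℝ → ℝ} {φ : ℝ → ℝ → ℝ}

theorem continuous_DN (hη : ContDiff ℝ 1 η) (hφ : ContDiff ℝ 1 ↿φ) : Continuous (DN η φ) := by
  have := continuous_phiX hφ
  have := continuous_phiY hφ
  have := hη.continuous
  have := hη.continuous_deriv le_rfl
  unfold DN
  fun_prop

theorem continuous_NOp (hη : ContDiff ℝ 1 η) (hφ : ContDiff ℝ 1 ↿φ) : Continuous (NOp η φ) := by
  have := continuous_phiX hφ
  have := continuous_phiY hφ
  have := hη.continuous
  have := hη.continuous_deriv le_rfl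
  unfold NOp
  fun_prop

end Trace

theorem trace_velocity_identity_general
    (L h : ℝ) (hh : 0 < h)
    (η : ℝ → ℝ) (hη : ContDiff ℝ 2 η) (hηper : ∀ x, η (x + 2*L) = η x)
    (hηlb : ∀ x, -h/2 ≤ η x)
    (φ : ℝ → ℝ → ℝ) (hφ : ContDiff ℝ 2 (Function.uncurry φ))
    (hφper : ∀ x y, φ (x + 2*L) y = φ x y)
    (hharm : ∀ x y : ℝ, -h < y → y < η x →
        deriv (fun x' => phiX φ x' y) x + deriv (fun y' => phiY φ x y') y = 0)
    (hbot : ∀ x : ℝ, phiY φ x (-h) = 0)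
    (χ : ℝ → ℝ) (hχ : ContDiff ℝ 1 χ) (hχper : ∀ x, χ (x + 2*L) = χ x)
    (V : ℝ → ℝ) (hV : ∀ x, V x = phiX φ x (η x)) :
    (∫ x in (-L)..L, χ x * (1 + (deriv η x)^2) * (V x)^2)
    = (∫ x in (-L)..L, χ x * (DN η φ x)^2)
      + (∫ x in (-L)..L, χ x * (phiX φ x (-h))^2)
      - 2 * (∫ x in (-L)..L, ∫ y in (-h)..(η x), deriv χ x * phiX φ x y * phiY φ x y) := by
  set f : ℝ → ℝ := fun x => ∫ y in (-h)..(η x), phiX φ x y * phiY φ x y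
  set w : ℝ → ℝ := fun x => NOp η φ x - phiX φ x (-h) ^ 2 / 2
  have hf (x : ℝ) : HasDerivAt f (w x) x := by
    simpa [w, hbot] using hasDerivAt_integral_phiX_mul_phiY hφ (hη.differentiable two_ne_zero x)
      (by linarith [hηlb x]) (hharm x)
  have hfper (x : ℝ) : f (x + 2 * L) = f x := by
    simp only [f, hηper, phiX_add_period hφper, phiY_add_period hφper]
  have hX := continuous_phiX (hφ.of_le one_le_two)
  have hDN := continuous_DN (hη.of_le one_le_two) (hφ.of_le one_le_two)
  have hN := continuous_NOp (hη.of_le one_le_two) (hφ.of_le one_le_two)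
  have hχc := hχ.continuous
  have hparts : ∫ x in (-L)..L, χ x * w x = -∫ x in (-L)..L, deriv χ x * f x :=
    integral_mul_deriv_eq_neg_integral_deriv_mul
      (fun x _ => (hχ.differentiable one_ne_zero x).hasDerivAt) (fun x _ => hf x)
      ((hχ.continuous_deriv le_rfl).intervalIntegrable _ _)
      (Continuous.intervalIntegrable (by fun_prop) _ _)
      (by rw [← hχper (-L), ← hfper (-L), show -L + 2 * L = L by ring])
  calc (∫ x in (-L)..L, χ x * (1 + deriv η x ^ 2) * V x ^ 2)
      = ∫ x in (-L)..L, χ x * DN η φ x ^ 2 + χ x * phiX φ x (-h) ^ 2 + 2 * (χ x * w x) :=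
        intervalIntegral.integral_congr fun x _ => by
          rw [hV, mul_assoc, one_add_deriv_sq_mul_phiX_sq]
          ring
    _ = (∫ x in (-L)..L, χ x * DN η φ x ^ 2) + (∫ x in (-L)..L, χ x * phiX φ x (-h) ^ 2)
        + 2 * ∫ x in (-L)..L, χ x * w x := by
        rw [intervalIntegral.integral_add (μ := volume),
          intervalIntegral.integral_add (μ := volume), intervalIntegral.integral_const_mul]
        all_goals exact Continuous.intervalIntegrable (by fun_prop) _ _
    _ = _ := by
        simp only [hparts, f, mul_assoc, intervalIntegral.integral_const_mul]
        ring

/-- the identity for the horizontal trace velocity (identity (d10) of the paper). -/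
theorem trace_velocity_identity
    (L h : ℝ) (hL : 0 < L) (hh : 0 < h)
    (η : ℝ → ℝ) (hη : ContDiff ℝ 2 η) (hηper : ∀ x, η (x + 2*L) = η x)
    (hηeven : ∀ x, η (-x) = η x) (hηlb : ∀ x, -h/2 ≤ η x)
    (φ : ℝ → ℝ → ℝ) (hφ : ContDiff ℝ 2 (Function.uncurry φ))
    (hφper : ∀ x y, φ (x + 2*L) y = φ x y) (hφeven : ∀ x y, φ (-x) y = φ x y)
    (hharm : ∀ x y : ℝ, -h < y → y < η x →
        deriv (fun x' => phiX φ x' y) x + deriv (fun y' => phiY φ x y') y = 0)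
    (hbot : ∀ x : ℝ, phiY φ x (-h) = 0)
    (χ : ℝ → ℝ) (hχ : ContDiff ℝ 1 χ) (hχper : ∀ x, χ (x + 2*L) = χ x)
    (V : ℝ → ℝ) (hV : ∀ x, V x = phiX φ x (η x)) :
    (∫ x in (-L)..L, χ x * (1 + (deriv η x)^2) * (V x)^2)
    = (∫ x in (-L)..L, χ x * (DN η φ x)^2)
      + (∫ x in (-L)..L, χ x * (phiX φ x (-h))^2)
      - 2 * (∫ x in (-L)..L, ∫ y in (-h)..(η x), deriv χ x * phiX φ x y * phiY φ x y) :=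
  trace_velocity_identity_general L h hh η hη hηper hηlb φ hφ hφper hharm hbot χ hχ hχper V hV
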